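/- Let I denote the set of quantum channels T on M_d such that for every ε > 0 there exists a finite list of quantum channels T₁, …, Tₙ with ‖Tᵢ − id‖ ≤ ε for each i and T = T₁ ∘ ⋯ ∘ Tₙ. If T belongs to the closure of I (i.e., T is infinitesimal divisible), then det T is real and det T ≥ 0. -/

import Mathlib

open Matrix
open scoped Kronecker ComplexOrder

noncomputable section

/-- `Mat d` is the space `M_d` of `d × d` complex matrices. -/
abbrev Mat (d : ℕ) := Matrix (Fin d) (Fin d) ℂ

/-- The Choi matrix `C(T) = Σ_{i,j} E_{ij} ⊗ T(E_{ij})` of a linear map on `M_d`. -/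
def choi {d : ℕ} (T : Mat d →ₗ[ℂ] Mat d) :
    Matrix (Fin d × Fin d) (Fin d × Fin d) ℂ :=
  ∑ i : Fin d, ∑ j : Fin d,
    (single i j (1 : ℂ)) ⊗ₖ T (single i j (1 : ℂ))

/-- A linear map on `M_d` is trace-preserving if it preserves the trace. -/
def IsTracePreserving {d : ℕ} (T : Mat d →ₗ[ℂ] Mat d) : Prop :=
  ∀ A : Mat d, (T A).trace = A.trace

/-- A linear map on `M_d` is completely positive if its Choi matrix is positive
semidefinite. -/
def IsCompletelyPositive {d : ℕ} (T : Mat d →ₗ[ℂ] Mat d) : Prop :=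
  (choi T).PosSemidef

/-- A quantum channel is a completely positive trace-preserving linear map. -/
def IsChannel {d : ℕ} (T : Mat d →ₗ[ℂ] Mat d) : Prop :=
  IsTracePreserving T ∧ IsCompletelyPositive T

/- Equip `M_d` with the Frobenius (Hilbert-Schmidt) norm, making the continuous linear
endomorphisms of `M_d` a Banach algebra with the induced operator norm. -/
attribute [local instance] Matrix.frobeniusNormedAddCommGroup Matrix.frobeniusNormedSpace

/-- The set `I` of quantum channels on `M_d` that, for every `ε > 0`, can be written as
a finite composition of quantum channels each within distance `ε` of the identity
(in the operator norm induced by the Frobenius norm on `M_d`). A channel is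
infinitesimal divisible if it lies in the closure of this set. -/
def InfDivSet (d : ℕ) : Set (Mat d →L[ℂ] Mat d) :=
  {T | ∀ ε : ℝ, 0 < ε → ∃ (n : ℕ) (Ts : Fin n → (Mat d →L[ℂ] Mat d)),
    (∀ i : Fin n, IsChannel ((Ts i : Mat d →L[ℂ] Mat d) : Mat d →ₗ[ℂ] Mat d) ∧
      @Norm.norm (Mat d →L[ℂ] Mat d) ContinuousLinearMap.hasOpNorm (Ts i - 1) ≤ ε) ∧
    IsChannel (T : Mat d →ₗ[ℂ] Mat d) ∧ T = (List.ofFn Ts).prod}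

/-! A completely positive map commutes with `Aᴴ ↦ Aᴴ`, which makes its determinant real. By
continuity of `det`, channels close enough to the identity therefore have positive determinant, so
every element of `I`, a product of such channels, does too; `det` being continuous, the closure of
`I` lies in `{S | 0 ≤ det S}`. -/

lemma choi_apply {d : ℕ} (T : Mat d →ₗ[ℂ] Mat d) (i k j l : Fin d) :
    choi T (i, k) (j, l) = T (single i j 1) k l := by
  simp only [choi, Matrix.sum_apply, kroneckerMap_apply, single_apply]
  simp [ite_and]

lemma map_conjTranspose_of_isHermitian_choi {d : ℕ} {T : Mat d →ₗ[ℂ] Mat d}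
    (hT : (choi T).IsHermitian) (A : Mat d) : T Aᴴ = (T A)ᴴ := by
  let J := (conjTransposeLinearEquiv (Fin d) (Fin d) ℂ ℂ).toLinearMap
  suffices T.comp J = J.comp T from LinearMap.congr_fun this A
  refine (stdBasis ℂ (Fin d) (Fin d)).ext fun ⟨i, j⟩ => ?_
  ext k l
  have hchoi := congr_fun₂ hT (j, k) (i, l)
  simp only [conjTranspose_apply, choi_apply] at hchoi
  simp [J, stdBasis_eq_single, conjTranspose_single, ← hchoi]

lemma star_det_of_map_conjTranspose {R n : Type*} [CommRing R] [StarRing R] [Fintype n]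
    [DecidableEq n] {T : Matrix n n R →ₗ[R] Matrix n n R} (hT : ∀ A, T Aᴴ = (T A)ᴴ) :
    star (LinearMap.det T) = LinearMap.det T := by
  let M := LinearMap.toMatrix (stdBasis R n n) (stdBasis R n n) T
  have hM : Mᴴ = Mᵀ.submatrix (Equiv.prodComm n n) (Equiv.prodComm n n) := by
    ext ⟨i, j⟩ ⟨k, l⟩
    have hji : T (single j i 1) = (T (single i j 1))ᴴ := by
      simpa [conjTranspose_single] using hT (single i j 1)
    simp only [M, conjTranspose_apply, transpose_apply, submatrix_apply, Equiv.prodComm_apply,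
      Prod.swap_prod_mk, LinearMap.toMatrix_apply, stdBasis_eq_single]
    change star (T (single i j 1) k l) = T (single j i 1) l k
    rw [hji, conjTranspose_apply]
  rw [← LinearMap.det_toMatrix (stdBasis R n n)]
  calc star M.det = Mᴴ.det := (det_conjTranspose M).symm
    _ = M.det := by rw [hM, det_submatrix_equiv_self, det_transpose]

lemma IsCompletelyPositive.star_det {d : ℕ} {T : Mat d →ₗ[ℂ] Mat d}
    (hT : IsCompletelyPositive T) : star (LinearMap.det T) = LinearMap.det T :=
  star_det_of_map_conjTranspose (map_conjTranspose_of_isHermitian_choi hT.isHermitian)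

lemma Complex.pos_of_star_eq_of_norm_sub_one_lt {z : ℂ} (hz : star z = z) (h : ‖z - 1‖ < 1) :
    0 < z := by
  obtain ⟨r, rfl⟩ := Complex.conj_eq_iff_real.mp hz
  rw [← Complex.ofReal_one, ← Complex.ofReal_sub, Complex.norm_real, Real.norm_eq_abs] at h
  exact Complex.zero_lt_real.mpr (by linarith [(abs_lt.mp h).1])

namespace ContinuousLinearMap

lemma det_list_prod {R M : Type*} [CommRing R] [TopologicalSpace M] [AddCommGroup M]
    [Module R M] [ContinuousAdd M] (L : List (M →L[R] M)) :
    L.prod.det = (L.map det).prod :=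
  map_list_prod (LinearMap.det.comp (toLinearMapRingHom : (M →L[R] M) →+* _).toMonoidHom) L

lemma exists_det_pos_of_norm_sub_one_le {E : Type*} [NormedAddCommGroup E] [NormedSpace ℂ E]
    [FiniteDimensional ℂ E] :
    ∃ ε > 0, ∀ S : E →L[ℂ] E, star S.det = S.det → ‖S - 1‖ ≤ ε → 0 < S.det := by
  have hcont : ContinuousAt (fun S : E →L[ℂ] E => S.det) 1 := continuous_det.continuousAt
  obtain ⟨δ, hδ, hdet⟩ := Metric.continuousAt_iff.mp hcont 1 one_pos
  refine ⟨δ / 2, half_pos hδ, fun S hS hSε => Complex.pos_of_star_eq_of_norm_sub_one_lt hS ?_⟩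
  have h1 : (1 : E →L[ℂ] E).det = 1 := LinearMap.det_id
  simpa [dist_eq_norm, h1] using @hdet S (by rw [dist_eq_norm]; linarith)

end ContinuousLinearMap

lemma det_pos_of_mem_infDivSet {d : ℕ} {S : Mat d →L[ℂ] Mat d} (hS : S ∈ InfDivSet d) :
    0 < S.det := by
  obtain ⟨ε, hε, hdet⟩ := ContinuousLinearMap.exists_det_pos_of_norm_sub_one_le (E := Mat d)
  obtain ⟨n, Ts, hTs, -, rfl⟩ := hS ε hε
  rw [ContinuousLinearMap.det_list_prod, List.map_ofFn, List.prod_ofFn]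
  exact Finset.prod_pos fun i _ => hdet (Ts i) (hTs i).1.2.star_det (hTs i).2

/-- an infinitesimal divisible channel (an element of the closure of the
set `I`) has real nonnegative determinant. -/
theorem infDiv_det_nonneg {d : ℕ} (T : Mat d →L[ℂ] Mat d)
    (hT : T ∈ closure (InfDivSet d)) :
    ∃ r : ℝ, LinearMap.det (T : Mat d →ₗ[ℂ] Mat d) = (r : ℂ) ∧ 0 ≤ r := by
  have hclosed : IsClosed {S : Mat d →L[ℂ] Mat d | 0 ≤ S.det} :=
    isClosed_le continuous_const ContinuousLinearMap.continuous_det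
  have hdet : 0 ≤ T.det :=
    closure_minimal (fun S hS => (det_pos_of_mem_infDivSet hS).le) hclosed hT
  obtain ⟨r, hr, hrT⟩ := RCLike.nonneg_iff_exists_ofReal.mp hdet
  exact ⟨r, hrT.symm, hr⟩
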